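/- Let A, B be sets of n binary vectors in {0,1}^d, A = {a₁,…,a_n}, B = {b₁,…,b_n}. Let N_A, N_B be normalized vector gadgets mapping {0,1}^d to permutations of [5d−1] satisfying LCS(N_A(a), N_B(b)) = 2d if ⟨a,b⟩ = 0 and 2d−1 otherwise. For v = 5d−1 and each (i,j) ∈ [n]×[n], let α_{i,j} = Δ_{((i−1)n+(j−1))v}(N_A(a_i)) and β_{i,j} = Δ_{((i−1)n+(j−1))v}(N_B(b_j)). Define f(A) = concatenation over i of (concatenation over j of α_{i,j}) and g(B) = concatenation over i of (concatenation over j of β_{i,j}). Then LCS(f(A), g(B)) = 2d·|S| + (2d−1)(n² − |S|), where S = {(i,j) : ⟨a_i, b_j⟩ = 0}. Consequently, d_U(f(A), g(B)) ≤ 3n²d − 1 if some pair (a_i, b_j) is orthogonal, and d_U(f(A), g(B)) = 3n²d otherwise. -/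

import Mathlib

/-! Block `(i, j)` of `f(A)` and of `g(B)` uses only symbols from the interval
`((i n + j) v, (i n + j + 1) v]`, and these intervals increase along the concatenation order.
A common subsequence therefore splits into common subsequences of corresponding blocks, so the
LCS is the sum over `(i, j)` of `LCS(N_A(a_i), N_B(b_j))` (shifting is injective). Since
`|f(A)| = n² (5d − 1)`, this gives `d_U(f(A), g(B)) = 3 d n² − |S|`. -/

/-- Length of a longest common subsequence of two strings (lists over ℕ). -/
noncomputable def LCS (x y : List ℕ) : ℕ :=
  sSup {k | ∃ s : List ℕ, s.Sublist x ∧ s.Sublist y ∧ s.length = k}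

/-- Ulam distance between permutations, via `d_U(σ,τ) = |σ| − LCS(σ,τ)`. -/
noncomputable def ulamDist (x y : List ℕ) : ℕ := x.length - LCS x y

/-- `π` is a permutation of `[n] = {1,…,n}` viewed as a string. -/
def IsPermOf (n : ℕ) (π : List ℕ) : Prop := π.Perm (List.range' 1 n)

/-- `Δ_k(s)`: add `k` to every symbol of `s`. -/
def shift (k : ℕ) (s : List ℕ) : List ℕ := s.map (· + k)

lemma bddAbove_lcs_set (x y : List ℕ) :
    BddAbove {k | ∃ s : List ℕ, s.Sublist x ∧ s.Sublist y ∧ s.length = k} :=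
  ⟨x.length, by rintro _ ⟨s, hx, -, rfl⟩; exact hx.length_le⟩

lemma exists_common_sublist_length_eq_lcs (x y : List ℕ) :
    ∃ s : List ℕ, s.Sublist x ∧ s.Sublist y ∧ s.length = LCS x y :=
  Nat.sSup_mem (s := {k | ∃ s : List ℕ, s.Sublist x ∧ s.Sublist y ∧ s.length = k})
    ⟨0, [], List.nil_sublist _, List.nil_sublist _, rfl⟩ (bddAbove_lcs_set x y)

lemma length_le_lcs {x y s : List ℕ} (hx : s.Sublist x) (hy : s.Sublist y) :
    s.length ≤ LCS x y :=
  le_csSup (bddAbove_lcs_set x y) ⟨s, hx, hy, rfl⟩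

lemma lcs_nil_nil : LCS [] [] = 0 := by
  obtain ⟨s, hs, -, hlen⟩ := exists_common_sublist_length_eq_lcs [] []
  rw [← hlen, List.sublist_nil.mp hs, List.length_nil]

lemma lcs_map_of_injective {f : ℕ → ℕ} (hf : Function.Injective f) (x y : List ℕ) :
    LCS (x.map f) (y.map f) = LCS x y := by
  apply le_antisymm
  · obtain ⟨s, hsx, hsy, hlen⟩ := exists_common_sublist_length_eq_lcs (x.map f) (y.map f)
    obtain ⟨t, htx, rfl⟩ := List.sublist_map_iff.mp hsx
    obtain ⟨t', hty, heq⟩ := List.sublist_map_iff.mp hsy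
    rw [← List.map_injective_iff.mpr hf heq] at hty
    rw [← hlen, List.length_map]
    exact length_le_lcs htx hty
  · obtain ⟨s, hsx, hsy, hlen⟩ := exists_common_sublist_length_eq_lcs x y
    simpa [hlen] using length_le_lcs (hsx.map f) (hsy.map f)

lemma lcs_shift (k : ℕ) (x y : List ℕ) : LCS (shift k x) (shift k y) = LCS x y :=
  lcs_map_of_injective (add_left_injective k) x y

lemma filter_append_eq_left {c : ℕ} {u v : List ℕ} (hu : ∀ a ∈ u, a ≤ c) (hv : ∀ a ∈ v, c < a) :
    (u ++ v).filter (· ≤ c) = u := by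
  rw [List.filter_append, List.filter_eq_self.mpr (by simpa using hu),
    List.filter_eq_nil_iff.mpr (by simpa using hv), List.append_nil]

lemma append_inj_of_le_lt {c : ℕ} {u₁ u₂ w₁ w₂ : List ℕ} (h : u₁ ++ u₂ = w₁ ++ w₂)
    (hu₁ : ∀ a ∈ u₁, a ≤ c) (hu₂ : ∀ a ∈ u₂, c < a)
    (hw₁ : ∀ a ∈ w₁, a ≤ c) (hw₂ : ∀ a ∈ w₂, c < a) : u₁ = w₁ ∧ u₂ = w₂ := by
  have h₁ : u₁ = w₁ := by
    rw [← filter_append_eq_left hu₁ hu₂, h, filter_append_eq_left hw₁ hw₂]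
  exact ⟨h₁, List.append_cancel_left (h₁ ▸ h)⟩

lemma lcs_append_of_le_lt {c : ℕ} {x₁ x₂ y₁ y₂ : List ℕ}
    (hx₁ : ∀ a ∈ x₁, a ≤ c) (hx₂ : ∀ a ∈ x₂, c < a)
    (hy₁ : ∀ a ∈ y₁, a ≤ c) (hy₂ : ∀ a ∈ y₂, c < a) :
    LCS (x₁ ++ x₂) (y₁ ++ y₂) = LCS x₁ y₁ + LCS x₂ y₂ := by
  apply le_antisymm
  · obtain ⟨s, hsx, hsy, hlen⟩ := exists_common_sublist_length_eq_lcs (x₁ ++ x₂) (y₁ ++ y₂)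
    obtain ⟨u₁, u₂, rfl, hu₁, hu₂⟩ := List.sublist_append_iff.mp hsx
    obtain ⟨w₁, w₂, heq, hw₁, hw₂⟩ := List.sublist_append_iff.mp hsy
    obtain ⟨rfl, rfl⟩ := append_inj_of_le_lt heq
      (fun a ha => hx₁ a (hu₁.subset ha)) (fun a ha => hx₂ a (hu₂.subset ha))
      (fun a ha => hy₁ a (hw₁.subset ha)) (fun a ha => hy₂ a (hw₂.subset ha))
    rw [← hlen, List.length_append]
    exact add_le_add (length_le_lcs hu₁ hw₁) (length_le_lcs hu₂ hw₂)
  · obtain ⟨s₁, hx₁', hy₁', hlen₁⟩ := exists_common_sublist_length_eq_lcs x₁ y₁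
    obtain ⟨s₂, hx₂', hy₂', hlen₂⟩ := exists_common_sublist_length_eq_lcs x₂ y₂
    simpa [hlen₁, hlen₂] using length_le_lcs (hx₁'.append hx₂') (hy₁'.append hy₂')

lemma lcs_flatten_of_pairwise {ι : Type*} (F G : ι → List ℕ) (lo hi : ι → ℕ)
    (hF : ∀ i, ∀ a ∈ F i, a ∈ Set.Ioc (lo i) (hi i))
    (hG : ∀ i, ∀ a ∈ G i, a ∈ Set.Ioc (lo i) (hi i)) :
    ∀ l : List ι, l.Pairwise (fun i j => hi i ≤ lo j) →
      LCS (l.map F).flatten (l.map G).flatten = (l.map fun i => LCS (F i) (G i)).sum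
  | [], _ => by simp [lcs_nil_nil]
  | i :: l, hl => by
    obtain ⟨hi_le, hl⟩ := List.pairwise_cons.mp hl
    have tail_gt : ∀ H : ι → List ℕ, (∀ j, ∀ a ∈ H j, a ∈ Set.Ioc (lo j) (hi j)) →
        ∀ a ∈ (l.map H).flatten, hi i < a := by
      intro H hH a ha
      simp only [List.mem_flatten, List.mem_map] at ha
      obtain ⟨_, ⟨j, hj, rfl⟩, ha⟩ := ha
      exact (hi_le j hj).trans_lt (hH j a ha).1
    simp only [List.map_cons, List.flatten_cons, List.sum_cons]
    rw [lcs_append_of_le_lt (fun a ha => (hF i a ha).2) (tail_gt F hF)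
      (fun a ha => (hG i a ha).2) (tail_gt G hG), lcs_flatten_of_pairwise F G lo hi hF hG l hl]

lemma mem_shift_of_isPermOf {m k a : ℕ} {π : List ℕ} (hπ : IsPermOf m π) (ha : a ∈ shift k π) :
    a ∈ Set.Ioc k (k + m) := by
  obtain ⟨b, hb, rfl⟩ := List.mem_map.mp ha
  have := List.mem_range'_1.mp (hπ.mem_iff.mp hb)
  constructor <;> omega

lemma length_shift_of_isPermOf {m k : ℕ} {π : List ℕ} (hπ : IsPermOf m π) :
    (shift k π).length = m := by
  simpa [shift] using hπ.length_eq

def blockRow (n v : ℕ) (P : Fin n → Fin n → List ℕ) (i : Fin n) : List ℕ :=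
  ((List.finRange n).map fun j => shift ((i.val * n + j.val) * v) (P i j)).flatten

def blockConcat (n v : ℕ) (P : Fin n → Fin n → List ℕ) : List ℕ :=
  ((List.finRange n).map (blockRow n v P)).flatten

section BlockConcat

variable {n v : ℕ} {P Q : Fin n → Fin n → List ℕ}

lemma mem_blockRow (hP : ∀ i j, IsPermOf v (P i j)) {i : Fin n} {a : ℕ}
    (ha : a ∈ blockRow n v P i) : a ∈ Set.Ioc (i.val * n * v) (i.val * n * v + n * v) := by
  simp only [blockRow, List.mem_flatten, List.mem_map] at ha
  obtain ⟨_, ⟨j, -, rfl⟩, ha⟩ := ha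
  obtain ⟨hlo, hhi⟩ := mem_shift_of_isPermOf (hP i j) ha
  have : (j.val + 1) * v ≤ n * v := Nat.mul_le_mul_right v j.isLt
  constructor <;> nlinarith

lemma lcs_blockRow (hP : ∀ i j, IsPermOf v (P i j)) (hQ : ∀ i j, IsPermOf v (Q i j))
    (i : Fin n) : LCS (blockRow n v P i) (blockRow n v Q i) = ∑ j, LCS (P i j) (Q i j) := by
  have hsep : (List.finRange n).Pairwise fun j j' : Fin n =>
      (i.val * n + j.val) * v + v ≤ (i.val * n + j'.val) * v :=
    (List.pairwise_lt_finRange n).imp fun hjj' => by nlinarith [Fin.val_fin_lt.mpr hjj']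
  rw [blockRow, blockRow, lcs_flatten_of_pairwise _ _ _ _
    (fun j _ => mem_shift_of_isPermOf (hP i j)) (fun j _ => mem_shift_of_isPermOf (hQ i j))
    _ hsep, Fin.sum_univ_def]
  simp only [lcs_shift]

lemma lcs_blockConcat (hP : ∀ i j, IsPermOf v (P i j)) (hQ : ∀ i j, IsPermOf v (Q i j)) :
    LCS (blockConcat n v P) (blockConcat n v Q) = ∑ i, ∑ j, LCS (P i j) (Q i j) := by
  have hsep : (List.finRange n).Pairwise fun i i' : Fin n =>
      i.val * n * v + n * v ≤ i'.val * n * v :=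
    (List.pairwise_lt_finRange n).imp fun {i i'} hii' =>
      calc i.val * n * v + n * v = (i.val + 1) * n * v := by ring
        _ ≤ i'.val * n * v := by gcongr; exact hii'
  rw [blockConcat, blockConcat, lcs_flatten_of_pairwise _ _ _ _
    (fun _ _ => mem_blockRow hP) (fun _ _ => mem_blockRow hQ) _ hsep, Fin.sum_univ_def]
  simp only [lcs_blockRow hP hQ]

lemma length_blockConcat (hP : ∀ i j, IsPermOf v (P i j)) :
    (blockConcat n v P).length = n ^ 2 * v := by
  simp [blockConcat, blockRow, Function.comp_def, length_shift_of_isPermOf (hP _ _)]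
  ring

end BlockConcat

open Finset in
lemma sum_ite_const_eq {α : Type*} [Fintype α] (p : α → Prop) [DecidablePred p] (x y : ℕ) :
    ∑ a, (if p a then x else y) =
      x * #{a | p a} + y * (Fintype.card α - #{a | p a}) := by
  have hcompl := card_filter_add_card_filter_not (s := univ) p
  rw [sum_ite, sum_const, sum_const, ← card_univ, ← hcompl, Nat.add_sub_cancel_left, smul_eq_mul,
    smul_eq_mul, mul_comm x, mul_comm y]

lemma gadget_length_sub_lcs_eq (N s d : ℕ) (hs : s ≤ N) :
    N * (5 * d - 1) - (2 * d * s + (2 * d - 1) * (N - s)) = 3 * N * d - s := by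
  obtain ⟨t, rfl⟩ := Nat.exists_eq_add_of_le hs
  rcases d with _ | e
  · simp
  · rw [Nat.add_sub_cancel_left, show 5 * (e + 1) - 1 = 5 * e + 4 by omega,
      show 2 * (e + 1) - 1 = 2 * e + 1 by omega]
    ring_nf
    omega

theorem or_gadget (n d : ℕ) (NA NB : (Fin d → Fin 2) → List ℕ)
    (hNA : ∀ x, IsPermOf (5 * d - 1) (NA x)) (hNB : ∀ x, IsPermOf (5 * d - 1) (NB x))
    (hLCS : ∀ x y, LCS (NA x) (NB y) =
      if (∑ i, (x i : ℕ) * (y i : ℕ)) = 0 then 2 * d else 2 * d - 1)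
    (a b : Fin n → Fin d → Fin 2)
    (fA gB : List ℕ)
    (hfA : fA = ((List.finRange n).map fun i => ((List.finRange n).map fun j =>
        shift ((i.val * n + j.val) * (5 * d - 1)) (NA (a i))).flatten).flatten)
    (hgB : gB = ((List.finRange n).map fun i => ((List.finRange n).map fun j =>
        shift ((i.val * n + j.val) * (5 * d - 1)) (NB (b j))).flatten).flatten)
    (S : Finset (Fin n × Fin n))
    (hS : S = Finset.univ.filter fun p => (∑ i, (a p.1 i : ℕ) * (b p.2 i : ℕ)) = 0) :
    LCS fA gB = 2 * d * S.card + (2 * d - 1) * (n ^ 2 - S.card) ∧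
    (S.Nonempty → ulamDist fA gB ≤ 3 * n ^ 2 * d - 1) ∧
    (S = ∅ → ulamDist fA gB = 3 * n ^ 2 * d) := by
  have hP : ∀ i _ : Fin n, IsPermOf (5 * d - 1) (NA (a i)) := fun i _ => hNA (a i)
  have hQ : ∀ _ j : Fin n, IsPermOf (5 * d - 1) (NB (b j)) := fun _ j => hNB (b j)
  replace hfA : fA = blockConcat n (5 * d - 1) fun i _ => NA (a i) := hfA
  replace hgB : gB = blockConcat n (5 * d - 1) fun _ j => NB (b j) := hgB
  have hSn : S.card ≤ n ^ 2 := by simpa [sq] using S.card_le_univ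
  have hlcs : LCS fA gB = 2 * d * S.card + (2 * d - 1) * (n ^ 2 - S.card) := by
    rw [hfA, hgB, lcs_blockConcat hP hQ, ← Fintype.sum_prod_type']
    simp only [hLCS]
    rw [sum_ite_const_eq, hS, Fintype.card_prod, Fintype.card_fin, sq]
  have hdist : ulamDist fA gB = 3 * n ^ 2 * d - S.card := by
    rw [ulamDist, hlcs, hfA, length_blockConcat hP, gadget_length_sub_lcs_eq _ _ _ hSn]
  refine ⟨hlcs, fun hne => ?_, fun hempty => ?_⟩
  · have := hne.card_pos
    omega
  · rw [hdist, hempty, Finset.card_empty, Nat.sub_zero]
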